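/- arXiv:1607.08228 — 3 statements merged into one kernel-verified Lean document; each statement's English description precedes it below -/
import Mathlib

section
/- Composition of point-wise privacy bounds: let μ be a sub-distribution on a countable set S, f : S → dist(S), and Γ : S → S an injection. Suppose μ(m') ≤ exp(ε₁)·μ'(Γ(m')) for all m' ∈ S (where μ' is another sub-distribution on S), and for every m' ∈ S and m ∈ S, f(m')(m) ≤ exp(ε₂)·f(Γ(m'))(Γ(m)). Then for every m ∈ S, (bind μ f)(m) ≤ exp(ε₁ + ε₂) · (bind μ' f)(Γ(m)). -/
open Function

-- `f` need not be summable: if it is not, `∑' i, f i = 0`.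
theorem tsum_le_tsum_of_summable_of_nonneg {ι : Type*} {f g : ι → ℝ} (h : ∀ i, f i ≤ g i)
    (hg : Summable g) (hg0 : ∀ i, 0 ≤ g i) : ∑' i, f i ≤ ∑' i, g i := by
  by_cases hf : Summable f
  · exact hf.tsum_le_tsum h hg
  · rw [tsum_eq_zero_of_not_summable hf]
    exact tsum_nonneg hg0

theorem tsum_le_mul_tsum_of_le_mul_comp_injective {ι κ : Type*} {a : ι → ℝ} {g : κ → ℝ}
    {Γ : ι → κ} {C : ℝ} (hΓ : Injective Γ) (hg : Summable g) (hg0 : ∀ k, 0 ≤ g k) (hC : 0 ≤ C)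
    (h : ∀ i, a i ≤ C * g (Γ i)) : ∑' i, a i ≤ C * ∑' k, g k :=
  calc ∑' i, a i ≤ ∑' i, C * g (Γ i) :=
        tsum_le_tsum_of_summable_of_nonneg h ((hg.comp_injective hΓ).mul_left C)
          fun _ => mul_nonneg hC (hg0 _)
    _ = C * ∑' i, g (Γ i) := tsum_mul_left
    _ ≤ C * ∑' k, g k := mul_le_mul_of_nonneg_left (tsum_comp_le_tsum_of_inj hg hg0 hΓ) hC

theorem bind_pointwise_compose_general {S : Type*}
    (μ μ' : S → ℝ) (f : S → S → ℝ) (Γ : S → S) (ε₁ ε₂ : ℝ)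
    (hΓ : Function.Injective Γ)
    (hμ'0 : ∀ m, 0 ≤ μ' m)
    (hf0 : ∀ m' m, 0 ≤ f m' m)
    (hs' : ∀ m, Summable (fun m' => f m' m * μ' m'))
    (hμ : ∀ m', μ m' ≤ Real.exp ε₁ * μ' (Γ m'))
    (hf : ∀ m' m, f m' m ≤ Real.exp ε₂ * f (Γ m') (Γ m)) :
    ∀ m, (∑' m', f m' m * μ m') ≤
      Real.exp (ε₁ + ε₂) * ∑' m', f m' (Γ m) * μ' m' := by
  intro m
  refine tsum_le_mul_tsum_of_le_mul_comp_injective hΓ (hs' (Γ m))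
    (fun _ => mul_nonneg (hf0 _ _) (hμ'0 _)) (Real.exp_pos _).le fun m' => ?_
  calc f m' m * μ m' ≤ (Real.exp ε₂ * f (Γ m') (Γ m)) * (Real.exp ε₁ * μ' (Γ m')) :=
        mul_le_mul_of_nonneg (hf m' m) (hμ m') (hf0 m' m)
          (mul_nonneg (Real.exp_pos _).le (hμ'0 _))
    _ = Real.exp (ε₁ + ε₂) * (f (Γ m') (Γ m) * μ' (Γ m')) := by
        rw [Real.exp_add]; ring

/-- Composition of point-wise privacy bounds through bind. -/
theorem bind_pointwise_compose {S : Type*} [Countable S]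
    (μ μ' : S → ℝ) (f : S → S → ℝ) (Γ : S → S) (ε₁ ε₂ : ℝ)
    (hΓ : Function.Injective Γ)
    (hμ0 : ∀ m, 0 ≤ μ m) (hμ'0 : ∀ m, 0 ≤ μ' m)
    (hf0 : ∀ m' m, 0 ≤ f m' m)
    (hs : ∀ m, Summable (fun m' => f m' m * μ m'))
    (hs' : ∀ m, Summable (fun m' => f m' m * μ' m'))
    (hμ : ∀ m', μ m' ≤ Real.exp ε₁ * μ' (Γ m'))
    (hf : ∀ m' m, f m' m ≤ Real.exp ε₂ * f (Γ m') (Γ m)) :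
    ∀ m, (∑' m', f m' m * μ m') ≤
      Real.exp (ε₁ + ε₂) * ∑' m', f m' (Γ m) * μ' m' :=
  bind_pointwise_compose_general μ μ' f Γ ε₁ ε₂ hΓ hμ'0 hf0 hs' hμ hf
end

section
/- The Sparse Vector alignment constraint is valid with α=1, β=2, γ=0: for all reals q, dq, η, T̃ with −1 ≤ dq ≤ 1, it holds that q + η ≥ T̃ if and only if q + dq + η + (if q + η ≥ T̃ then 2 else 0) ≥ T̃ + 1. -/
/-- The Sparse Vector alignment constraint holds with α=1, β=2, γ=0. -/
theorem sparse_vector_alignment_120 :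
    ∀ q dq η T : ℝ, -1 ≤ dq → dq ≤ 1 →
      (q + η ≥ T ↔ q + dq + η + (if q + η ≥ T then (2 : ℝ) else 0) ≥ T + 1) := by
  intro q dq η T hdq_ge hdq_le
  split_ifs with above
  · exact iff_of_true above (by linarith)
  · exact iff_of_false above (by linarith)
end

section
/- If (α, β, γ) satisfies ∀ q dq η T̃ ∈ ℝ, (−1 ≤ dq ≤ 1) → ((q + η ≥ T̃) ⟺ (q + dq + η + (if q + η ≥ T̃ then β else γ) ≥ T̃ + α)), i.e. (α, β, γ) is a satisfying Sparse Vector alignment, then β ≥ α + 1 and γ ≤ α − 1. -/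
/-- Necessary conditions for any satisfying Sparse Vector alignment:
    β ≥ α + 1 and γ ≤ α − 1. -/
theorem sparse_vector_necessary (α β γ : ℝ)
    (h : ∀ q dq η T : ℝ, -1 ≤ dq → dq ≤ 1 →
      (q + η ≥ T ↔ q + dq + η + (if q + η ≥ T then β else γ) ≥ T + α)) :
    β ≥ α + 1 ∧ γ ≤ α - 1 := by
  constructor
  · have h1 := h 0 (-1) 0 0 (by norm_num) (by norm_num)
    simp at h1
    linarith
  · by_contra hc
    push_neg at hc
    set T := (γ + 1 - α) / 2 with hT
    have hTpos : T > 0 := by rw [hT]; linarith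
    have h2 := h 0 1 0 T (by norm_num) (by norm_num)
    have hlt : ¬ ((0:ℝ) + 0 ≥ T) := by linarith
    simp only [if_neg hlt] at h2
    have : (0:ℝ) + 1 + 0 + γ ≥ T + α := by rw [hT]; linarith
    have := h2.mpr this
    linarith
end
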